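/- Let Ω ⊆ [d1]×[d2] and let M* = U* (V*)^T with U* ∈ ℝ^{d1×r}, V* ∈ ℝ^{d2×r}, where max_i ‖e_i^T U*‖² ≤ μr‖M*‖/d1 and max_j ‖e_j^T V*‖² ≤ μr‖M*‖/d2. Suppose each row and column of the indicator of Ω has at most an α fraction of entries. Let U ∈ ℝ^{d1×r}, V ∈ ℝ^{d2×r} satisfy max_i ‖e_i^T U‖² ≤ μr‖M*‖/d1 and max_j ‖e_j^T V‖² ≤ μr‖M*‖/d2, and set M = UV^T, Δ_U = U − U*, Δ_V = V − V*. Then Σ_{(i,j)∈Ω} (M − M*)_{ij}² ≤ 4·α·μr·‖M*‖·(‖Δ_U‖_F² + ‖Δ_V‖_F²). -/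

import Mathlib

/-!
Write `M - M* = Δ_U Vᵀ + U* Δ_Vᵀ`. By Cauchy–Schwarz each entry satisfies
`(M - M*)ᵢⱼ² ≤ 2 (‖Δ_U row i‖² ‖V row j‖² + ‖U* row i‖² ‖Δ_V row j‖²)`, and incoherence bounds
the rows of `V` and `U*` by `μr‖M*‖/d₂` and `μr‖M*‖/d₁`. Summing over `Ω`, each row index occurs
at most `α d₂` times and each column index at most `α d₁` times, which cancels the dimensions and
gives the bound with constant `2`.
-/

open Matrix BigOperators
open scoped Classical

noncomputable section

/-- Squared Frobenius norm of a real matrix. -/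
def frobSq {m n : Type*} [Fintype m] [Fintype n] (A : Matrix m n ℝ) : ℝ :=
  ∑ i, ∑ j, (A i j) ^ 2

/-- Spectral (ℓ2 operator) norm of a real matrix. -/
def specNorm {m n : Type*} [Fintype m] [Fintype n] [DecidableEq n] (A : Matrix m n ℝ) : ℝ :=
  ‖LinearMap.toContinuousLinearMap (Matrix.toEuclideanLin A)‖

theorem Finset.sum_comp_le_mul_sum {γ ι : Type*} [Fintype ι] [DecidableEq ι] (s : Finset γ)
    (g : γ → ι) {f : ι → ℝ} (hf : ∀ i, 0 ≤ f i) {c : ℝ}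
    (hc : ∀ i, ((s.filter fun p => g p = i).card : ℝ) ≤ c) :
    ∑ p ∈ s, f (g p) ≤ c * ∑ i, f i := by
  rw [← Finset.sum_fiberwise s g, Finset.mul_sum]
  refine Finset.sum_le_sum fun i _ => ?_
  rw [Finset.sum_congr rfl fun p hp => congrArg f (Finset.mem_filter.mp hp).2,
    Finset.sum_const, nsmul_eq_mul]
  exact mul_le_mul_of_nonneg_right (hc i) (hf i)

namespace Matrix

variable {m n k : Type*} [Fintype k]

def rowNormSq (A : Matrix m k ℝ) (i : m) : ℝ :=
  ∑ l, A i l ^ 2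

theorem rowNormSq_nonneg (A : Matrix m k ℝ) (i : m) : 0 ≤ rowNormSq A i :=
  Finset.sum_nonneg fun _ _ => sq_nonneg _

theorem frobSq_eq_sum_rowNormSq [Fintype m] (A : Matrix m k ℝ) :
    frobSq A = ∑ i, rowNormSq A i :=
  rfl

theorem frobSq_nonneg [Fintype m] (A : Matrix m k ℝ) : 0 ≤ frobSq A :=
  Finset.sum_nonneg fun i _ => rowNormSq_nonneg A i

theorem sq_mul_transpose_apply_le (A : Matrix m k ℝ) (B : Matrix n k ℝ) (i : m) (j : n) :
    (A * Bᵀ) i j ^ 2 ≤ rowNormSq A i * rowNormSq B j := by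
  simpa [mul_apply, rowNormSq] using Finset.sum_mul_sq_le_sq_mul_sq Finset.univ (A i) (B j)

theorem sq_mul_transpose_sub_apply_le (U U' : Matrix m k ℝ) (V V' : Matrix n k ℝ)
    (i : m) (j : n) :
    (U * Vᵀ - U' * V'ᵀ) i j ^ 2 ≤
      2 * (rowNormSq (U - U') i * rowNormSq V j + rowNormSq U' i * rowNormSq (V - V') j) := by
  have hsplit : U * Vᵀ - U' * V'ᵀ = (U - U') * Vᵀ + U' * (V - V')ᵀ := by
    rw [transpose_sub, Matrix.sub_mul, Matrix.mul_sub]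
    abel
  have h₁ := sq_mul_transpose_apply_le (U - U') V i j
  have h₂ := sq_mul_transpose_apply_le U' (V - V') i j
  rw [hsplit, add_apply]
  nlinarith [sq_nonneg (((U - U') * Vᵀ) i j - (U' * (V - V')ᵀ) i j)]

theorem sum_sq_mul_transpose_sub_le [Fintype m] [Fintype n] [DecidableEq m] [DecidableEq n]
    [Nonempty m] [Nonempty n] (Ω : Finset (m × n)) (U U' : Matrix m k ℝ) (V V' : Matrix n k ℝ)
    {E α : ℝ} (hU' : ∀ i, rowNormSq U' i ≤ E / Fintype.card m)
    (hV : ∀ j, rowNormSq V j ≤ E / Fintype.card n)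
    (hrow : ∀ i, ((Ω.filter fun p => p.1 = i).card : ℝ) ≤ α * Fintype.card n)
    (hcol : ∀ j, ((Ω.filter fun p => p.2 = j).card : ℝ) ≤ α * Fintype.card m) :
    ∑ p ∈ Ω, (U * Vᵀ - U' * V'ᵀ) p.1 p.2 ^ 2 ≤
      2 * α * E * (frobSq (U - U') + frobSq (V - V')) := by
  obtain ⟨i₀⟩ := ‹Nonempty m›
  obtain ⟨j₀⟩ := ‹Nonempty n›
  have hEm : 0 ≤ E / Fintype.card m := (rowNormSq_nonneg U' i₀).trans (hU' i₀)
  have hEn : 0 ≤ E / Fintype.card n := (rowNormSq_nonneg V j₀).trans (hV j₀)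
  calc ∑ p ∈ Ω, (U * Vᵀ - U' * V'ᵀ) p.1 p.2 ^ 2
      ≤ ∑ p ∈ Ω, 2 * (rowNormSq (U - U') p.1 * (E / Fintype.card n) +
          E / Fintype.card m * rowNormSq (V - V') p.2) := by
        refine Finset.sum_le_sum fun p _ =>
          (sq_mul_transpose_sub_apply_le U U' V V' _ _).trans ?_
        have := rowNormSq_nonneg (U - U') p.1
        have := rowNormSq_nonneg (V - V') p.2
        gcongr
        exacts [hV p.2, hU' p.1]
    _ = 2 * ((∑ p ∈ Ω, rowNormSq (U - U') p.1) * (E / Fintype.card n) +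
          E / Fintype.card m * ∑ p ∈ Ω, rowNormSq (V - V') p.2) := by
        rw [← Finset.mul_sum, Finset.sum_add_distrib, ← Finset.sum_mul, ← Finset.mul_sum]
    _ ≤ 2 * (α * Fintype.card n * frobSq (U - U') * (E / Fintype.card n) +
          E / Fintype.card m * (α * Fintype.card m * frobSq (V - V'))) := by
        rw [frobSq_eq_sum_rowNormSq, frobSq_eq_sum_rowNormSq]
        gcongr
        · exact Finset.sum_comp_le_mul_sum Ω Prod.fst (rowNormSq_nonneg _) hrow
        · exact Finset.sum_comp_le_mul_sum Ω Prod.snd (rowNormSq_nonneg _) hcol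
    _ = 2 * α * E * (frobSq (U - U') + frobSq (V - V')) := by
        field_simp

theorem specNorm_zero [Fintype m] [Fintype n] [DecidableEq n] :
    specNorm (0 : Matrix m n ℝ) = 0 := by
  simp [specNorm]

end Matrix

theorem stmt7_general {d1 d2 r : ℕ} (Ω : Finset (Fin d1 × Fin d2))
    (U Ustar : Matrix (Fin d1) (Fin r) ℝ) (V Vstar : Matrix (Fin d2) (Fin r) ℝ)
    (μ α : ℝ)
    (hUstar : ∀ i, (∑ k, (Ustar i k) ^ 2) ≤ μ * r * specNorm (Ustar * Vstarᵀ) / d1)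
    (hV : ∀ j, (∑ k, (V j k) ^ 2) ≤ μ * r * specNorm (Ustar * Vstarᵀ) / d2)
    (hrow : ∀ i : Fin d1, ((Ω.filter fun p => p.1 = i).card : ℝ) ≤ α * d2)
    (hcol : ∀ j : Fin d2, ((Ω.filter fun p => p.2 = j).card : ℝ) ≤ α * d1) :
    ∑ p ∈ Ω, ((U * Vᵀ - Ustar * Vstarᵀ) p.1 p.2) ^ 2 ≤
      4 * α * (μ * r) * specNorm (Ustar * Vstarᵀ) *
        (frobSq (U - Ustar) + frobSq (V - Vstar)) := by
  rcases Nat.eq_zero_or_pos d1 with rfl | hd1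
  · rw [Subsingleton.elim Ω ∅, Subsingleton.elim (Ustar * Vstarᵀ) 0, specNorm_zero]
    simp
  rcases Nat.eq_zero_or_pos d2 with rfl | hd2
  · rw [Subsingleton.elim Ω ∅, Subsingleton.elim (Ustar * Vstarᵀ) 0, specNorm_zero]
    simp
  have : NeZero d1 := ⟨hd1.ne'⟩
  have : NeZero d2 := ⟨hd2.ne'⟩
  set E := μ * r * specNorm (Ustar * Vstarᵀ)
  have hE : 0 ≤ E := by
    have := (rowNormSq_nonneg Ustar 0).trans (hUstar 0)
    simpa using (le_div_iff₀ (by positivity)).mp this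
  have hα : 0 ≤ α := by
    have := (Nat.cast_nonneg _).trans (hrow 0)
    exact (mul_nonneg_iff_of_pos_right (by positivity)).mp this
  have hF := add_nonneg (frobSq_nonneg (U - Ustar)) (frobSq_nonneg (V - Vstar))
  calc ∑ p ∈ Ω, ((U * Vᵀ - Ustar * Vstarᵀ) p.1 p.2) ^ 2
      ≤ 2 * α * E * (frobSq (U - Ustar) + frobSq (V - Vstar)) :=
        sum_sq_mul_transpose_sub_le Ω U Ustar V Vstar (by simpa [rowNormSq] using hUstar)
          (by simpa [rowNormSq] using hV)
          (by simpa using hrow) (by simpa using hcol)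
    _ ≤ 4 * α * E * (frobSq (U - Ustar) + frobSq (V - Vstar)) := by
        gcongr
        norm_num
    _ = _ := by ring

/-- If `M* = U*(V*)ᵀ` and `M = UVᵀ` are incoherent (all rows of `U, U*` bounded by
`√(μr‖M*‖/d1)` and rows of `V, V*` by `√(μr‖M*‖/d2)`), and `Ω` has at most an `α`
fraction of entries in each row/column, then
`Σ_{(i,j)∈Ω} (M − M*)_{ij}² ≤ 4αμr‖M*‖(‖Δ_U‖_F² + ‖Δ_V‖_F²)`. -/
theorem stmt7 {d1 d2 r : ℕ} (Ω : Finset (Fin d1 × Fin d2))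
    (U Ustar : Matrix (Fin d1) (Fin r) ℝ) (V Vstar : Matrix (Fin d2) (Fin r) ℝ)
    (μ α : ℝ)
    (hUstar : ∀ i, (∑ k, (Ustar i k) ^ 2) ≤ μ * r * specNorm (Ustar * Vstarᵀ) / d1)
    (hVstar : ∀ j, (∑ k, (Vstar j k) ^ 2) ≤ μ * r * specNorm (Ustar * Vstarᵀ) / d2)
    (hU : ∀ i, (∑ k, (U i k) ^ 2) ≤ μ * r * specNorm (Ustar * Vstarᵀ) / d1)
    (hV : ∀ j, (∑ k, (V j k) ^ 2) ≤ μ * r * specNorm (Ustar * Vstarᵀ) / d2)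
    (hrow : ∀ i : Fin d1, ((Ω.filter fun p => p.1 = i).card : ℝ) ≤ α * d2)
    (hcol : ∀ j : Fin d2, ((Ω.filter fun p => p.2 = j).card : ℝ) ≤ α * d1) :
    ∑ p ∈ Ω, ((U * Vᵀ - Ustar * Vstarᵀ) p.1 p.2) ^ 2 ≤
      4 * α * (μ * r) * specNorm (Ustar * Vstarᵀ) *
        (frobSq (U - Ustar) + frobSq (V - Vstar)) :=
  stmt7_general Ω U Ustar V Vstar μ α hUstar hV hrow hcol
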